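/- Let M ∈ ℍ^{n×n} be written in block form M = [[A, B], [C, D]] with A ∈ ℍ^{k×k} invertible, B ∈ ℍ^{k×(n−k)}, C ∈ ℍ^{(n−k)×k}, D ∈ ℍ^{(n−k)×(n−k)}. Then det 𝒵[M] = det 𝒵[A] · det 𝒵[D − C A⁻¹ B]. Equivalently, Sdet(M) = Sdet(A) · Sdet(D − CA⁻¹B). -/

import Mathlib

open Matrix
open scoped NNReal

/-- The complex number `z` with `q = z + j·w` for a quaternion `q`. -/
noncomputable def quatC1 (q : Quaternion ℝ) : ℂ := ⟨q.re, q.imI⟩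

/-- The complex number `w` with `q = z + j·w` for a quaternion `q`. -/
noncomputable def quatC2 (q : Quaternion ℝ) : ℂ := ⟨q.imJ, -q.imK⟩

lemma quatC1_add (p q : Quaternion ℝ) : quatC1 (p + q) = quatC1 p + quatC1 q := by
  simp [quatC1, Complex.ext_iff]

lemma quatC2_add (p q : Quaternion ℝ) : quatC2 (p + q) = quatC2 p + quatC2 q := by
  simp [quatC2, Complex.ext_iff]; ring

lemma quatC1_zero : quatC1 0 = 0 := by simp [quatC1, Complex.ext_iff, Quaternion.re_zero, Quaternion.imI_zero, Quaternion.imJ_zero, Quaternion.imK_zero]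
lemma quatC2_zero : quatC2 0 = 0 := by simp [quatC2, Complex.ext_iff, Quaternion.re_zero, Quaternion.imI_zero, Quaternion.imJ_zero, Quaternion.imK_zero]

noncomputable def quatC1Hom : Quaternion ℝ →+ ℂ :=
  { toFun := quatC1, map_zero' := quatC1_zero, map_add' := quatC1_add }

noncomputable def quatC2Hom : Quaternion ℝ →+ ℂ :=
  { toFun := quatC2, map_zero' := quatC2_zero, map_add' := quatC2_add }

lemma quatC1_mul (p q : Quaternion ℝ) :
    quatC1 (p * q) = quatC1 p * quatC1 q - star (quatC2 p) * quatC2 q := by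
  simp [quatC1, quatC2, Complex.ext_iff, Quaternion.re_mul, Quaternion.imI_mul,
    Complex.mul_re, Complex.mul_im]
  constructor <;> ring

lemma quatC2_mul (p q : Quaternion ℝ) :
    quatC2 (p * q) = star (quatC1 p) * quatC2 q + quatC2 p * quatC1 q := by
  simp [quatC1, quatC2, Complex.ext_iff, Quaternion.imJ_mul, Quaternion.imK_mul,
    Complex.mul_re, Complex.mul_im]
  constructor <;> ring

noncomputable def ZmatR {m n : Type*} (M : Matrix m n (Quaternion ℝ)) :
    Matrix (m ⊕ m) (n ⊕ n) ℂ :=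
  Matrix.fromBlocks (M.map quatC1) (-(M.map fun q => star (quatC2 q)))
    (M.map quatC2) (M.map fun q => star (quatC1 q))

lemma quatC1_sum {s : Finset α} (f : α → Quaternion ℝ) :
    quatC1 (∑ x ∈ s, f x) = ∑ x ∈ s, quatC1 (f x) := map_sum quatC1Hom f s

lemma quatC2_sum {s : Finset α} (f : α → Quaternion ℝ) :
    quatC2 (∑ x ∈ s, f x) = ∑ x ∈ s, quatC2 (f x) := map_sum quatC2Hom f s

lemma ZmatR_mul {m n p : Type*} [Fintype n] (M : Matrix m n (Quaternion ℝ))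
    (N : Matrix n p (Quaternion ℝ)) : ZmatR (M * N) = ZmatR M * ZmatR N := by
  ext i j
  rcases i with i | i <;> rcases j with j | j <;>
    simp [ZmatR, Matrix.mul_apply, Fintype.sum_sum_type, quatC1_sum, quatC2_sum,
      quatC1_mul, quatC2_mul, Finset.sum_sub_distrib, Finset.sum_add_distrib,
      star_sum, mul_comm, sub_eq_add_neg, add_comm]

noncomputable def Zmat {m : Type*} [Fintype m] [DecidableEq m]
    (M : Matrix m m (Quaternion ℝ)) : Matrix (m ⊕ m) (m ⊕ m) ℂ :=
  Matrix.fromBlocks (M.map quatC1) (-(M.map fun q => star (quatC2 q)))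
    (M.map quatC2) (M.map fun q => star (quatC1 q))

lemma Zmat_eq {m : Type*} [Fintype m] [DecidableEq m] (M : Matrix m m (Quaternion ℝ)) :
    Zmat M = ZmatR M := rfl

lemma Zmat_one {m : Type*} [Fintype m] [DecidableEq m] :
    Zmat (1 : Matrix m m (Quaternion ℝ)) = 1 := by
  ext i j
  rcases i with i | i <;> rcases j with j | j <;>
    simp [Zmat, Matrix.one_apply, quatC1, quatC2, Complex.ext_iff, apply_ite,
      Quaternion.re_zero, Quaternion.imI_zero, Quaternion.imJ_zero, Quaternion.imK_zero, Quaternion.re_one, Quaternion.imI_one, Quaternion.imJ_one, Quaternion.imK_one] <;>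
    split_ifs <;> constructor <;> rfl

lemma ZmatR_zero {m n : Type*} : ZmatR (0 : Matrix m n (Quaternion ℝ)) = 0 := by
  ext i j
  rcases i with i | i <;> rcases j with j | j <;>
    simp [ZmatR, quatC1_zero, quatC2_zero]

lemma Zmat_fromBlocks {m n : Type*} [Fintype m] [DecidableEq m] [Fintype n] [DecidableEq n]
    (A : Matrix m m (Quaternion ℝ)) (B : Matrix m n (Quaternion ℝ))
    (C : Matrix n m (Quaternion ℝ)) (D : Matrix n n (Quaternion ℝ)) :
    Zmat (Matrix.fromBlocks A B C D) =
      (Matrix.fromBlocks (Zmat A) (ZmatR B) (ZmatR C) (Zmat D)).submatrix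
        (Equiv.sumSumSumComm m n m n) (Equiv.sumSumSumComm m n m n) := by
  ext i j
  rcases i with (i | i) | (i | i) <;> rcases j with (j | j) | (j | j) <;> rfl

lemma det_Zmat_fromBlocks_zero₂₁ {m n : Type*} [Fintype m] [DecidableEq m]
    [Fintype n] [DecidableEq n]
    (A : Matrix m m (Quaternion ℝ)) (B : Matrix m n (Quaternion ℝ))
    (D : Matrix n n (Quaternion ℝ)) :
    (Zmat (Matrix.fromBlocks A B 0 D)).det = (Zmat A).det * (Zmat D).det := by
  rw [Zmat_fromBlocks, Matrix.det_submatrix_equiv_self, ZmatR_zero,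
    Matrix.det_fromBlocks_zero₂₁]

lemma det_Zmat_fromBlocks_zero₁₂ {m n : Type*} [Fintype m] [DecidableEq m]
    [Fintype n] [DecidableEq n]
    (A : Matrix m m (Quaternion ℝ)) (C : Matrix n m (Quaternion ℝ))
    (D : Matrix n n (Quaternion ℝ)) :
    (Zmat (Matrix.fromBlocks A 0 C D)).det = (Zmat A).det * (Zmat D).det := by
  rw [Zmat_fromBlocks, Matrix.det_submatrix_equiv_self, ZmatR_zero,
    Matrix.det_fromBlocks_zero₁₂]

/-- Schur complement formula for the q-determinant: if `A` is invertible then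
`det 𝒵[[[A,B],[C,D]]] = det 𝒵[A] · det 𝒵[D − CA⁻¹B]`. -/
theorem qdet_schur_complement (k l : ℕ)
    (A : Matrix (Fin k) (Fin k) (Quaternion ℝ)) (B : Matrix (Fin k) (Fin l) (Quaternion ℝ))
    (C : Matrix (Fin l) (Fin k) (Quaternion ℝ)) (D : Matrix (Fin l) (Fin l) (Quaternion ℝ))
    (A' : Matrix (Fin k) (Fin k) (Quaternion ℝ)) (hA : A * A' = 1) (hA' : A' * A = 1) :
    (Zmat (Matrix.fromBlocks A B C D)).det = (Zmat A).det * (Zmat (D - C * A' * B)).det := by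
  have factor : Matrix.fromBlocks A B C D =
      Matrix.fromBlocks 1 0 (C * A') 1 * Matrix.fromBlocks A B 0 (D - C * A' * B) := by
    have h1 : C * A' * A = C := by rw [Matrix.mul_assoc, hA', Matrix.mul_one]
    simp [Matrix.fromBlocks_multiply, h1]
  rw [factor, Zmat_eq, ZmatR_mul, Matrix.det_mul, ← Zmat_eq, ← Zmat_eq,
    det_Zmat_fromBlocks_zero₁₂, det_Zmat_fromBlocks_zero₂₁]
  simp [Zmat_one]
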